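/- Let X = {1,2} and S := X × {0,1}, with swap transition q_{1,2} = q_{2,1} = 1 and q_{1,1} = q_{2,2} = 0, cost Φ(x, μ) = 5 if μ(x) > 1/2 and Φ(x, μ) = 1 if μ(x) ≤ 1/2, horizon T = 1, and initial distribution ν_0 with ν_0(1,1) = 3/4, ν_0(2,1) = 1/4, and ν_0(x,0) = 0. For a policy p = (p_0, p_1) with p_n : X → [0,1] and p_1 ≡ 1, define ν_1 = F̄(ν_0, p_0) and J(p) := Σ_{n=0}^{1} Σ_{x∈X} ν_n(x,1) Φ(x, (ν_n)_X) p_n(x). Then: (a) the minimum of J over policies with p_0 taking values in {0,1} equals 4; (b) the randomized policy with p_0(1) = 1/3 and p_0(2) = 0 satisfies J(p) = 2. In particular, the infimum over [0,1]-valued (randomized) stopping policies is strictly smaller than the minimum over {0,1}-valued (non-randomized) stopping policies. -/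
import Mathlib


/-!
The "randomized is better" example: two states with swap dynamics, cost
`Φ(x,μ) = 5` if `μ(x) > 1/2` and `1` otherwise, horizon `T = 1`, and initial
distribution `(3/4, 1/4)` (all alive). Every deterministic (`{0,1}`-valued)
stopping rule has cost at least `4` (with value `4` attained), whereas the
randomized rule stopping a third of the mass in the first state costs `2`; hence
the infimum over randomized stopping policies is strictly smaller than the
minimum over non-randomized ones.

States: `0` plays the role of the paper's state `1`, and `1` of the state `2`.
-/

namespace RandomizedIsBetter

/-- Swap transition: `q_{1,2} = q_{2,1} = 1`, `q_{1,1} = q_{2,2} = 0`. -/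
def q (z x : Fin 2) : ℝ := if x = z then 0 else 1

/-- Cost `Φ(x, μ) = 5` if `μ(x) > 1/2`, else `1`. -/
noncomputable def Φ (x : Fin 2) (μ : Fin 2 → ℝ) : ℝ := if 1 / 2 < μ x then 5 else 1

/-- Initial distribution: `ν_0(1,1) = 3/4`, `ν_0(2,1) = 1/4`, `ν_0(x,0) = 0`. -/
noncomputable def ν0 : Fin 2 × Bool → ℝ
  | (x, true) => if x = 0 then 3 / 4 else 1 / 4
  | (_, false) => 0

/-- First marginal `ν_X(x) = ν(x,0) + ν(x,1)`. -/
def margX (ν : Fin 2 × Bool → ℝ) (x : Fin 2) : ℝ := ν (x, false) + ν (x, true)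

/-- The mean-field transition `F̄(ν,h)`. -/
def Fbar (ν : Fin 2 × Bool → ℝ) (h : Fin 2 → ℝ) : Fin 2 × Bool → ℝ
  | (x, false) => ν (x, false) + ν (x, true) * h x
  | (x, true) => ∑ z, ν (z, true) * q z x * (1 - h z)

/-- Total cost of the policy `p = (p_0, p_1)` with `p_1 ≡ 1`:
`J(p) = Σ_{n=0}^{1} Σ_x ν_n(x,1) Φ(x,(ν_n)_X) p_n(x)` with `ν_1 = F̄(ν_0, p_0)`. -/
noncomputable def J (p0 : Fin 2 → ℝ) : ℝ :=
  (∑ x, ν0 (x, true) * Φ x (margX ν0) * p0 x) +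
    ∑ x, (Fbar ν0 p0) (x, true) * Φ x (margX (Fbar ν0 p0)) * 1

/-- (a) the minimum of `J` over `{0,1}`-valued (non-randomized) stopping rules
equals `4`; (b) the randomized rule `p_0(1) = 1/3`, `p_0(2) = 0` has cost `2`;
hence (c) the infimum of `J` over `[0,1]`-valued (randomized) stopping rules is
strictly smaller than that minimum. -/
theorem randomized_better :
    IsLeast {r | ∃ p0 : Fin 2 → ℝ, (∀ x, p0 x = 0 ∨ p0 x = 1) ∧ J p0 = r} 4 ∧
      J (fun x => if x = 0 then 1 / 3 else 0) = 2 ∧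
      sInf {r | ∃ p0 : Fin 2 → ℝ, (∀ x, p0 x ∈ Set.Icc (0 : ℝ) 1) ∧ J p0 = r} < 4 :=
  by
  have key : ∀ p0 : Fin 2 → ℝ, (∀ x, p0 x = 0 ∨ p0 x = 1) → 4 ≤ J p0 := by
    intro p0 h
    rcases h 0 with h0 | h0 <;> rcases h 1 with h1 | h1 <;>
      · simp [J, Fbar, margX, ν0, q, Φ, Fin.sum_univ_two, h0, h1]
        norm_num
  have h2 : J (fun x => if x = 0 then 1 / 3 else 0) = 2 := by
    simp [J, Fbar, margX, ν0, q, Φ, Fin.sum_univ_two]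
    norm_num
  refine ⟨⟨⟨fun _ => 1, fun x => Or.inr rfl, ?_⟩, ?_⟩, h2, ?_⟩
  · show J (fun _ => 1) = 4
    simp [J, Fbar, margX, ν0, q, Φ, Fin.sum_univ_two]
    norm_num
  · rintro r ⟨p0, hp, rfl⟩
    exact key p0 hp
  · have hmem : (2 : ℝ) ∈ {r | ∃ p0 : Fin 2 → ℝ,
        (∀ x, p0 x ∈ Set.Icc (0 : ℝ) 1) ∧ J p0 = r} := by
      refine ⟨fun x => if x = 0 then 1 / 3 else 0, fun x => ?_, h2⟩
      by_cases hx : x = 0 <;> simp [hx] <;> norm_num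
    by_cases hb : BddBelow {r | ∃ p0 : Fin 2 → ℝ,
        (∀ x, p0 x ∈ Set.Icc (0 : ℝ) 1) ∧ J p0 = r}
    · exact lt_of_le_of_lt (csInf_le hb hmem) (by norm_num)
    · rw [Real.sInf_of_not_bddBelow hb]; norm_num


end RandomizedIsBetter
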